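/- arXiv:1506.07084 — 2 statements merged into one kernel-verified Lean document; each statement's English description precedes it below -/
import Mathlib

section
/- For nonnegative integers j, k and all real p, q with z = p + iq: the Fourier-Wigner transform of the normalized Hermite functions e_n(x) = h_n(x)/√(2^n n! √π) satisfies V(e_{j+k}, e_j)(p, q) = (j! / (2π · 2^k · (j+k)!))^{1/2} · z^k · L_j^{(k)}(|z|²/2) · e^{-|z|²/4}. -/
open MeasureTheory Complex Real

noncomputable def Hphys (n : ℕ) (x : ℝ) : ℝ :=
  (-1 : ℝ)^n * Real.exp (x^2) * iteratedDeriv n (fun t : ℝ => Real.exp (-t^2)) x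

noncomputable def hFun (n : ℕ) (x : ℝ) : ℝ := Real.exp (-x^2/2) * Hphys n x

noncomputable def Hc (m n : ℕ) (z : ℂ) : ℂ :=
  ∑ k ∈ Finset.range (min m n + 1),
    (-1 : ℂ)^k * (Nat.factorial k : ℂ) * (Nat.choose m k : ℂ) * (Nat.choose n k : ℂ)
      * z^(m-k) * (starRingEnd ℂ z)^(n-k)

noncomputable def Lag (n α : ℕ) (x : ℂ) : ℂ :=
  ∑ k ∈ Finset.range (n + 1),
    (-1 : ℂ)^k * (Nat.choose (n + α) (n - k) : ℂ) * x^k / (Nat.factorial k : ℂ)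

noncomputable def eFun (n : ℕ) (x : ℝ) : ℝ :=
  hFun n x / Real.sqrt (2^n * (Nat.factorial n : ℝ) * Real.sqrt Real.pi)

noncomputable def FW2 (f g : ℝ → ℂ) (p q : ℝ) : ℂ :=
  ((2 * Real.pi) ^ (-(1:ℝ)/2) : ℝ) *
    ∫ y : ℝ, Complex.exp (Complex.I * y * q) * f (y + p/2) * (starRingEnd ℂ) (g (y - p/2))

/-!
Write `h_n = H_n e^{-x²/2}` with `H_n` the physicists' Hermite polynomial and put
`J(S, T) = ∫ e^{iqy} S(y + p/2) T(y - p/2) e^{-(y+p/2)²/2 - (y-p/2)²/2} dy`, a bilinear form on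
real polynomials. Integrating by parts, together with `J(XS, T) - J(S, XT) = p J(S, T)`,
`H_n' = 2n H_{n-1}` and `2x H_n = H_{n+1} + 2n H_{n-1}`, gives, for `z = p + iq`,
`J(H_{m+1}, H_n) = z J(H_m, H_n) + 2n J(H_m, H_{n-1})` and
`J(H_m, H_{n+1}) = -z̄ J(H_m, H_n) + 2m J(H_{m-1}, H_n)`, while `J(1, 1) = √π e^{-|z|²/4}` is a
Gaussian integral. These recurrences are solved by
`√π e^{-|z|²/4} ∑_r (-1)^{n-r} 2^r C(m, r) n(n-1)⋯(n-r+1) z^{m-r} z̄^{n-r}`, and reversing the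
summation index turns this sum at `(m, n) = (j + k, j)` into `2^j j! z^k L_j^{(k)}(|z|²/2)`.
-/

open Polynomial

noncomputable def physHermite : ℕ → ℝ[X]
  | 0 => 1
  | n + 1 => 2 * X * physHermite n - derivative (physHermite n)

lemma physHermite_zero : physHermite 0 = 1 := rfl

lemma physHermite_succ (n : ℕ) :
    physHermite (n + 1) = 2 * X * physHermite n - derivative (physHermite n) := rfl

lemma derivative_physHermite_succ (n : ℕ) :
    derivative (physHermite (n + 1)) = (2 * (n + 1) : ℝ) • physHermite n := by
  induction n with
  | zero => simp [physHermite_succ, physHermite_zero, derivative_mul, smul_eq_C_mul, C_ofNat]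
  | succ n ih =>
    rw [physHermite_succ (n + 1), derivative_sub, ih, derivative_mul, derivative_smul, ih,
      physHermite_succ n]
    simp only [derivative_mul, derivative_ofNat, derivative_X, smul_eq_C_mul, map_mul, map_add,
      map_natCast, map_one, map_ofNat]
    push_cast
    ring

lemma derivative_physHermite (n : ℕ) :
    derivative (physHermite n) = (2 * n : ℝ) • physHermite (n - 1) := by
  cases n with
  | zero => simp [physHermite_zero]
  | succ n => simpa using derivative_physHermite_succ n

lemma X_mul_physHermite (n : ℕ) :
    X * physHermite n = (1 / 2 : ℝ) • physHermite (n + 1) + (n : ℝ) • physHermite (n - 1) := by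
  rw [physHermite_succ, derivative_physHermite, mul_assoc, two_mul]
  module

lemma hasDerivAt_eval_mul_exp_neg_mul_sq (b : ℝ) (P : ℝ[X]) (x : ℝ) :
    HasDerivAt (fun x => P.eval x * Real.exp (-b * x ^ 2))
      ((derivative P - C (2 * b) * X * P).eval x * Real.exp (-b * x ^ 2)) x := by
  have hexp : HasDerivAt (fun x => Real.exp (-b * x ^ 2))
      (Real.exp (-b * x ^ 2) * (-b * (2 * x))) x := by
    simpa using ((hasDerivAt_pow 2 x).const_mul (-b)).exp
  refine ((P.hasDerivAt x).fun_mul hexp).congr_deriv ?_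
  simp only [eval_sub, eval_mul, eval_C, eval_X]
  ring

lemma iteratedDeriv_exp_neg_sq (n : ℕ) :
    iteratedDeriv n (fun t : ℝ => Real.exp (-t ^ 2)) =
      fun x => (-1) ^ n * (physHermite n).eval x * Real.exp (-x ^ 2) := by
  induction n with
  | zero => ext x; simp [physHermite_zero]
  | succ n ih =>
    ext x
    have h := (hasDerivAt_eval_mul_exp_neg_mul_sq 1 (physHermite n) x).const_mul ((-1) ^ n)
    simp only [neg_one_mul, ← mul_assoc] at h
    rw [iteratedDeriv_succ, ih, h.deriv, physHermite_succ]
    simp only [eval_sub, eval_mul, eval_C, eval_X, eval_ofNat]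
    ring

lemma Hphys_eq_eval_physHermite (n : ℕ) (x : ℝ) : Hphys n x = (physHermite n).eval x := by
  rw [Hphys, iteratedDeriv_exp_neg_sq]
  calc (-1) ^ n * Real.exp (x ^ 2) * ((-1) ^ n * (physHermite n).eval x * Real.exp (-x ^ 2))
      = ((-1) ^ n * (-1) ^ n) * (Real.exp (x ^ 2) * Real.exp (-x ^ 2))
          * (physHermite n).eval x := by ring
    _ = (physHermite n).eval x := by rw [← mul_pow, ← Real.exp_add]; simp

noncomputable def gaussWeighted (S : ℝ[X]) (x : ℝ) : ℝ := S.eval x * Real.exp (-x ^ 2 / 2)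

lemma hFun_eq_gaussWeighted (n : ℕ) : hFun n = gaussWeighted (physHermite n) := by
  ext x
  rw [hFun, gaussWeighted, Hphys_eq_eval_physHermite, mul_comm]

lemma hasDerivAt_gaussWeighted (S : ℝ[X]) (x : ℝ) :
    HasDerivAt (gaussWeighted S) (gaussWeighted (derivative S - X * S) x) x := by
  have h := hasDerivAt_eval_mul_exp_neg_mul_sq (1 / 2) S x
  simp only [show ∀ y : ℝ, -(1 / 2) * y ^ 2 = -y ^ 2 / 2 from fun y => by ring] at h
  exact h.congr_deriv (by simp [gaussWeighted])

lemma gaussWeighted_add_mul_gaussWeighted_sub (S T : ℝ[X]) (a y : ℝ) :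
    gaussWeighted S (y + a) * gaussWeighted T (y - a) =
      (S.comp (X + C a) * T.comp (X - C a)).eval y * Real.exp (-1 * y ^ 2)
        * Real.exp (-a ^ 2) := by
  simp only [gaussWeighted, eval_mul, eval_comp, eval_add, eval_sub, eval_X, eval_C]
  have : Real.exp (-(y + a) ^ 2 / 2) * Real.exp (-(y - a) ^ 2 / 2) =
      Real.exp (-1 * y ^ 2) * Real.exp (-a ^ 2) := by
    rw [← Real.exp_add, ← Real.exp_add]; ring_nf
  linear_combination S.eval (y + a) * T.eval (y - a) * this

lemma integrable_eval_mul_exp_neg_mul_sq {b : ℝ} (hb : 0 < b) (P : ℝ[X]) :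
    Integrable fun x => P.eval x * Real.exp (-b * x ^ 2) := by
  simp_rw [eval_eq_sum_range, Finset.sum_mul]
  refine integrable_finsetSum _ fun i _ => ?_
  simp_rw [mul_assoc]
  refine Integrable.const_mul ?_ _
  simpa [Real.rpow_natCast] using
    integrable_rpow_mul_exp_neg_mul_sq hb (s := i) (neg_one_lt_zero.trans_le i.cast_nonneg)

noncomputable def wignerIntegrand (p q : ℝ) (S T : ℝ[X]) (y : ℝ) : ℂ :=
  Complex.exp (I * y * q) * gaussWeighted S (y + p / 2) * gaussWeighted T (y - p / 2)

lemma integrable_wignerIntegrand (p q : ℝ) (S T : ℝ[X]) :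
    Integrable (wignerIntegrand p q S T) := by
  have hprod : Integrable fun y =>
      ((gaussWeighted S (y + p / 2) * gaussWeighted T (y - p / 2) : ℝ) : ℂ) := by
    simp_rw [gaussWeighted_add_mul_gaussWeighted_sub]
    exact ((integrable_eval_mul_exp_neg_mul_sq one_pos _).mul_const _).ofReal
  refine (hprod.bdd_mul (f := fun y : ℝ => Complex.exp (I * y * q)) (c := 1)
    (by fun_prop : Continuous _).aestronglyMeasurable (.of_forall fun y => ?_)).congr
    (.of_forall fun y => ?_)
  · rw [Complex.norm_exp]; simp
  · simp [wignerIntegrand, mul_assoc]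

noncomputable def wignerForm (p q : ℝ) : ℝ[X] →ₗ[ℝ] ℝ[X] →ₗ[ℝ] ℂ :=
  LinearMap.mk₂ ℝ (fun S T => ∫ y, wignerIntegrand p q S T y)
    (fun S₁ S₂ T => by
      rw [← integral_add (integrable_wignerIntegrand ..) (integrable_wignerIntegrand ..)]
      congr 1; ext y
      simp only [wignerIntegrand, gaussWeighted, eval_add]; push_cast; ring)
    (fun c S T => by
      rw [← integral_smul]
      congr 1; ext y
      simp only [wignerIntegrand, gaussWeighted, eval_smul, smul_eq_mul, Complex.real_smul]
      push_cast; ring)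
    (fun S T₁ T₂ => by
      rw [← integral_add (integrable_wignerIntegrand ..) (integrable_wignerIntegrand ..)]
      congr 1; ext y
      simp only [wignerIntegrand, gaussWeighted, eval_add]; push_cast; ring)
    (fun c S T => by
      rw [← integral_smul]
      congr 1; ext y
      simp only [wignerIntegrand, gaussWeighted, eval_smul, smul_eq_mul, Complex.real_smul]
      push_cast; ring)

lemma wignerForm_apply (p q : ℝ) (S T : ℝ[X]) :
    wignerForm p q S T = ∫ y, wignerIntegrand p q S T y := rfl

lemma wignerForm_X_mul_sub (p q : ℝ) (S T : ℝ[X]) :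
    wignerForm p q (X * S) T - wignerForm p q S (X * T) = p * wignerForm p q S T := by
  simp only [wignerForm_apply]
  rw [← integral_sub (integrable_wignerIntegrand ..) (integrable_wignerIntegrand ..),
    ← integral_const_mul]
  congr 1; ext y
  simp only [wignerIntegrand, gaussWeighted, eval_mul, eval_X]; push_cast; ring

lemma hasDerivAt_wignerIntegrand (p q : ℝ) (S T : ℝ[X]) (y : ℝ) :
    HasDerivAt (wignerIntegrand p q S T)
      (I * q * wignerIntegrand p q S T y + wignerIntegrand p q (derivative S - X * S) T y
        + wignerIntegrand p q S (derivative T - X * T) y) y := by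
  have hS := ((hasDerivAt_gaussWeighted S (y + p / 2)).comp y
    ((hasDerivAt_id y).add_const (p / 2))).ofReal_comp
  have hT := ((hasDerivAt_gaussWeighted T (y - p / 2)).comp y
    ((hasDerivAt_id y).sub_const (p / 2))).ofReal_comp
  have hexp := (((hasDerivAt_id y).ofReal_comp.const_mul I).mul_const (q : ℂ)).cexp
  refine ((hexp.fun_mul hS).fun_mul hT).congr_deriv ?_
  simp only [wignerIntegrand, Function.comp_apply, id, Complex.ofReal_one, mul_one]
  ring

lemma wignerForm_integration_by_parts (p q : ℝ) (S T : ℝ[X]) :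
    I * q * wignerForm p q S T + wignerForm p q (derivative S - X * S) T
      + wignerForm p q S (derivative T - X * T) = 0 := by
  have hi := integrable_wignerIntegrand p q
  have h := integral_eq_zero_of_hasDerivAt_of_integrable (hasDerivAt_wignerIntegrand p q S T)
    ((((hi S T).const_mul _).add (hi _ T)).add (hi S _)) (hi S T)
  rw [integral_add ?_ (hi S _), integral_add ((hi S T).const_mul _) (hi _ T),
    integral_const_mul] at h
  exacts [h, ((hi S T).const_mul _).add (hi _ T)]

lemma wignerForm_physHermite_succ_left (p q : ℝ) (m n : ℕ) :
    wignerForm p q (physHermite (m + 1)) (physHermite n) =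
      ((p : ℂ) + I * q) * wignerForm p q (physHermite m) (physHermite n)
        + 2 * n * wignerForm p q (physHermite m) (physHermite (n - 1)) := by
  have hX := wignerForm_X_mul_sub p q (physHermite m) (physHermite n)
  have hD := wignerForm_integration_by_parts p q (physHermite m) (physHermite n)
  simp only [derivative_physHermite, X_mul_physHermite, map_add, map_sub, map_smul,
    LinearMap.add_apply, LinearMap.sub_apply, LinearMap.smul_apply, Complex.real_smul] at hX hD
  push_cast at hX hD
  linear_combination hX - hD

lemma wignerForm_physHermite_succ_right (p q : ℝ) (m n : ℕ) :
    wignerForm p q (physHermite m) (physHermite (n + 1)) =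
      -starRingEnd ℂ ((p : ℂ) + I * q) * wignerForm p q (physHermite m) (physHermite n)
        + 2 * m * wignerForm p q (physHermite (m - 1)) (physHermite n) := by
  have hX := wignerForm_X_mul_sub p q (physHermite m) (physHermite n)
  have hD := wignerForm_integration_by_parts p q (physHermite m) (physHermite n)
  simp only [derivative_physHermite, X_mul_physHermite, map_add, map_sub, map_smul,
    LinearMap.add_apply, LinearMap.sub_apply, LinearMap.smul_apply, Complex.real_smul] at hX hD
  push_cast at hX hD
  simp only [map_add, map_mul, Complex.conj_ofReal, Complex.conj_I]
  linear_combination -(hX + hD)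

lemma wignerForm_one_one (p q : ℝ) :
    wignerForm p q 1 1 = Real.sqrt π * Complex.exp (-(‖(p : ℂ) + I * q‖ ^ 2 : ℝ) / 4) := by
  have hnorm : ‖(p : ℂ) + I * q‖ ^ 2 = p ^ 2 + q ^ 2 := by
    rw [Complex.sq_norm, mul_comm, Complex.normSq_add_mul_I]
  have hint : ∀ y : ℝ, wignerIntegrand p q 1 1 y =
      Complex.exp (-1 * y ^ 2 + I * q * y + -(p ^ 2 : ℝ) / 4) := by
    intro y
    simp only [wignerIntegrand, gaussWeighted, eval_one, one_mul, Complex.ofReal_exp,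
      ← Complex.exp_add]
    push_cast; ring_nf
  rw [wignerForm_apply, funext hint, integral_cexp_quadratic (by simp), hnorm]
  congr 1
  · rw [Real.sqrt_eq_rpow, Complex.ofReal_cpow Real.pi_pos.le]; norm_num
  · push_cast; rw [mul_pow, Complex.I_sq]; congr 1; ring

noncomputable def wignerPoly (z : ℂ) (m n : ℕ) : ℂ :=
  ∑ r ∈ Finset.range (n + 1), (-1) ^ (n - r) * 2 ^ r * (m.choose r : ℂ)
    * (n.descFactorial r : ℂ) * z ^ (m - r) * starRingEnd ℂ z ^ (n - r)

lemma wignerPoly_zero_left (z : ℂ) (n : ℕ) : wignerPoly z 0 n = (-starRingEnd ℂ z) ^ n := by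
  rw [wignerPoly, Finset.sum_eq_single_of_mem 0 (by simp) fun r _ hr => by
    simp [Nat.choose_eq_zero_of_lt (Nat.pos_of_ne_zero hr)]]
  simp [neg_pow (starRingEnd ℂ z)]

lemma choose_succ_succ_mul_pow_sub {R : Type*} [CommSemiring R] (z : R) (m r : ℕ) :
    ((m + 1).choose (r + 1) : R) * z ^ (m - r) =
      m.choose r * z ^ (m - r) + z * (m.choose (r + 1) * z ^ (m - (r + 1))) := by
  rw [Nat.choose_succ_succ, Nat.cast_add, add_mul]
  rcases Nat.lt_or_ge m (r + 1) with hm | hm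
  · simp [Nat.choose_eq_zero_of_lt hm]
  · rw [show m - r = m - (r + 1) + 1 by omega, pow_succ]
    ring

lemma wignerPoly_succ_left (z : ℂ) (m n : ℕ) :
    wignerPoly z (m + 1) n = z * wignerPoly z m n + 2 * n * wignerPoly z m (n - 1) := by
  cases n with
  | zero => simp [wignerPoly, pow_succ]; ring
  | succ n =>
    simp only [wignerPoly]
    conv_lhs => rw [Finset.sum_range_succ']
    conv_rhs => rw [Finset.sum_range_succ', Nat.add_sub_cancel, mul_add, Finset.mul_sum,
      Finset.mul_sum, add_right_comm, ← Finset.sum_add_distrib]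
    congr 1
    · refine Finset.sum_congr rfl fun r _ => ?_
      rw [Nat.succ_descFactorial_succ, Nat.add_sub_add_right, Nat.add_sub_add_right]
      push_cast
      linear_combination ((-1) ^ (n - r) * 2 ^ (r + 1) * (n + 1) * (n.descFactorial r : ℂ)
        * starRingEnd ℂ z ^ (n - r)) * choose_succ_succ_mul_pow_sub z m r
    · simp [pow_succ]; ring

lemma wignerForm_physHermite (p q : ℝ) (m n : ℕ) :
    wignerForm p q (physHermite m) (physHermite n) =
      Real.sqrt π * Complex.exp (-(‖(p : ℂ) + I * q‖ ^ 2 : ℝ) / 4)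
        * wignerPoly ((p : ℂ) + I * q) m n := by
  induction m generalizing n with
  | zero =>
    induction n with
    | zero => simp [wignerPoly_zero_left, physHermite_zero, wignerForm_one_one]
    | succ n ih =>
      rw [wignerForm_physHermite_succ_right, ih, wignerPoly_zero_left, wignerPoly_zero_left]
      ring
  | succ m ih =>
    rw [wignerForm_physHermite_succ_left, ih, ih, wignerPoly_succ_left]
    ring

lemma wignerPoly_add_eq_Lag (z : ℂ) (j k : ℕ) :
    wignerPoly z (j + k) j = 2 ^ j * j.factorial * z ^ k * Lag j k ((‖z‖ ^ 2 / 2 : ℝ) : ℂ) := by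
  rw [wignerPoly, Lag, Finset.mul_sum, ← Finset.sum_range_reflect]
  refine Finset.sum_congr rfl fun s hs => ?_
  have hsj : s ≤ j := Nat.lt_succ_iff.mp (Finset.mem_range.mp hs)
  rw [Nat.add_sub_cancel, Nat.sub_sub_self hsj, show j + k - (j - s) = k + s by omega]
  have hfac : (s.factorial : ℂ) * j.descFactorial (j - s) = j.factorial := by
    exact_mod_cast (Nat.sub_sub_self hsj ▸ Nat.factorial_mul_descFactorial (Nat.sub_le j s))
  have hz : z ^ (k + s) * starRingEnd ℂ z ^ s = z ^ k * (2 * ((‖z‖ ^ 2 / 2 : ℝ) : ℂ)) ^ s := by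
    push_cast
    rw [pow_add, mul_assoc, ← mul_pow, Complex.mul_conj']
    ring
  have hpow2 : (2 : ℂ) ^ (j - s) * 2 ^ s = 2 ^ j := by rw [← pow_add, Nat.sub_add_cancel hsj]
  have hs0 : (s.factorial : ℂ) ≠ 0 := by exact_mod_cast s.factorial_ne_zero
  rw [← hfac, mul_assoc _ (z ^ (k + s)), hz, ← hpow2, mul_pow]
  field_simp

lemma FW2_const_mul (f g : ℝ → ℂ) (a b : ℂ) (p q : ℝ) :
    FW2 (fun x => a * f x) (fun x => b * g x) p q = a * starRingEnd ℂ b * FW2 f g p q := by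
  simp only [FW2, map_mul, ← integral_const_mul]
  congr 1; ext y; ring

lemma FW2_hFun (m n : ℕ) (p q : ℝ) :
    FW2 (fun x => (hFun m x : ℂ)) (fun x => (hFun n x : ℂ)) p q =
      ((2 * π) ^ (-(1 : ℝ) / 2) : ℝ) * wignerForm p q (physHermite m) (physHermite n) := by
  simp only [FW2, wignerForm_apply, wignerIntegrand, hFun_eq_gaussWeighted, Complex.conj_ofReal]

lemma hermite_normalization_constant (j k : ℕ) :
    (2 * π) ^ (-(1 : ℝ) / 2) * Real.sqrt π * (2 ^ j * j.factorial) *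
        ((Real.sqrt (2 ^ (j + k) * (j + k).factorial * Real.sqrt π))⁻¹ *
          (Real.sqrt (2 ^ j * j.factorial * Real.sqrt π))⁻¹) =
      Real.sqrt (j.factorial / (2 * π * 2 ^ k * (j + k).factorial)) := by
  have hπ : Real.sqrt π ^ 2 = π := Real.sq_sqrt Real.pi_pos.le
  rw [eq_comm, Real.sqrt_eq_iff_eq_sq (by positivity) (by positivity)]
  rw [show (-(1 : ℝ) / 2) = -(1 / 2) by norm_num, Real.rpow_neg (by positivity),
    ← Real.sqrt_eq_rpow]
  simp only [mul_pow, inv_pow, Real.sq_sqrt (by positivity : (0 : ℝ) ≤ 2 * π),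
    Real.sq_sqrt (by positivity : (0 : ℝ) ≤ 2 ^ (j + k) * (j + k).factorial * Real.sqrt π),
    Real.sq_sqrt (by positivity : (0 : ℝ) ≤ 2 ^ j * j.factorial * Real.sqrt π), hπ]
  have : (j.factorial : ℝ) ≠ 0 := by positivity
  field_simp
  rw [hπ, pow_add]
  ring

theorem FW_normalized_hermite (j k : ℕ) (p q : ℝ) :
    FW2 (fun x => (eFun (j + k) x : ℂ)) (fun x => (eFun j x : ℂ)) p q
      = (Real.sqrt ((Nat.factorial j : ℝ) / (2 * Real.pi * 2^k * (Nat.factorial (j + k) : ℝ))) : ℂ)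
          * ((p : ℂ) + Complex.I * q)^k
          * Lag j k (((‖(p : ℂ) + Complex.I * q‖^2 / 2 : ℝ)) : ℂ)
          * Complex.exp (-((‖(p : ℂ) + Complex.I * q‖^2 : ℝ) : ℂ) / 4) := by
  have heFun (n : ℕ) : (fun x => (eFun n x : ℂ)) = fun x =>
      ((Real.sqrt (2 ^ n * n.factorial * Real.sqrt π))⁻¹ : ℝ) * (hFun n x : ℂ) := by
    ext x; simp [eFun, div_eq_inv_mul]
  rw [heFun, heFun, FW2_const_mul, FW2_hFun, wignerForm_physHermite, wignerPoly_add_eq_Lag,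
    Complex.conj_ofReal, ← hermite_normalization_constant]
  push_cast
  ring
end

section
/- The complex Hermite polynomials are orthogonal with respect to the Gaussian measure: ∫_ℂ H_{m,n}(z, z̄) · conj(H_{m',n'}(z, z̄)) · e^{-|z|²} dA(z) = π · m! · n! · δ_{m,m'} · δ_{n,n'}, where dA is Lebesgue measure on ℂ ≅ ℝ². -/
open MeasureTheory Complex Real

/-!
The moments of the Gaussian weight are `∫ z ^ a * conj z ^ b * e^{-|z|²} = π a!` if `a = b` and
`0` otherwise (rotation invariance kills `a ≠ b`). Feeding them into the recurrence
`H_{m,n+1} = z̄ H_{m,n} - m H_{m-1,n}` gives, by induction on `n`,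
`∫ H_{m,n} z^a z̄^b e^{-|z|²} = π b! a(a-1)⋯(a-n+1)` when `m + a = n + b`, and `0` otherwise.
In particular `H_{m,n}` is orthogonal to `z^a z̄^b` whenever `a < n`. Since
`conj H_{m',n'} = H_{n',m'}` is a combination of the monomials `z^{n'-k} z̄^{m'-k}`, for `n' ≤ n`
only its leading monomial `z^{n'} z̄^{m'}` can contribute; the case `n < n'` follows by conjugate
symmetry of the pairing.
-/

open scoped ComplexConjugate Nat

noncomputable def gaussWeight (z : ℂ) : ℂ := (Real.exp (-‖z‖ ^ 2) : ℝ)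

lemma integral_norm_pow_mul_exp_neg_sq (k : ℕ) :
    ∫ z : ℂ, ‖z‖ ^ k * Real.exp (-‖z‖ ^ 2) = π * Real.Gamma (k / 2 + 1) := by
  have h := Complex.integral_rpow_mul_exp_neg_rpow (p := 2) (q := k) (by norm_num)
    (by linarith [k.cast_nonneg (α := ℝ)])
  simp only [Real.rpow_natCast, Real.rpow_two] at h
  rw [h]
  ring_nf

lemma integrable_norm_pow_mul_exp_neg_sq (k : ℕ) :
    Integrable fun z : ℂ => ‖z‖ ^ k * Real.exp (-‖z‖ ^ 2) :=
  .of_integral_ne_zero <| by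
    rw [integral_norm_pow_mul_exp_neg_sq]
    exact (mul_pos pi_pos (Real.Gamma_pos_of_pos (by positivity))).ne'

lemma norm_monomial_mul_gaussWeight (a b : ℕ) (z : ℂ) :
    ‖z ^ a * conj z ^ b * gaussWeight z‖ = ‖z‖ ^ (a + b) * Real.exp (-‖z‖ ^ 2) := by
  rw [norm_mul, norm_mul, norm_pow, norm_pow, Complex.norm_conj, gaussWeight, Complex.norm_real,
    Real.norm_of_nonneg (Real.exp_pos _).le, pow_add]

lemma integrable_monomial_mul_gaussWeight (a b : ℕ) :
    Integrable fun z : ℂ => z ^ a * conj z ^ b * gaussWeight z :=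
  (integrable_norm_pow_mul_exp_neg_sq (a + b)).mono' (by unfold gaussWeight; fun_prop)
    (.of_forall fun z => (norm_monomial_mul_gaussWeight a b z).le)

lemma integral_monomial_mul_gaussWeight_self (a : ℕ) :
    ∫ z : ℂ, z ^ a * conj z ^ a * gaussWeight z = (π : ℂ) * (a ! : ℂ) := by
  have h (z : ℂ) : z ^ a * conj z ^ a * gaussWeight z
      = ((‖z‖ ^ (2 * a) * Real.exp (-‖z‖ ^ 2) : ℝ) : ℂ) := by
    rw [← mul_pow, mul_conj, normSq_eq_norm_sq, gaussWeight]
    push_cast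
    ring
  simp_rw [h]
  rw [integral_complex_ofReal, integral_norm_pow_mul_exp_neg_sq,
    show ((2 * a : ℕ) : ℝ) / 2 + 1 = a + 1 by push_cast; ring, Real.Gamma_nat_eq_factorial]
  norm_cast

lemma gaussWeight_circle_mul (c : Circle) (z : ℂ) : gaussWeight (c * z) = gaussWeight z := by
  rw [gaussWeight, gaussWeight, norm_mul, Circle.norm_coe, one_mul]

lemma integral_monomial_mul_gaussWeight_of_ne {a b : ℕ} (hab : a ≠ b) :
    ∫ z : ℂ, z ^ a * conj z ^ b * gaussWeight z = 0 := by
  -- rotating by `c = exp (iπ / (a - b))` multiplies the integrand by `c ^ a * conj c ^ b = -1`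
  obtain ⟨c, hc⟩ : ∃ c : Circle, (c : ℂ) ^ a * conj (c : ℂ) ^ b = -1 := by
    refine ⟨Circle.exp (π / (a - b)), ?_⟩
    have hab' : (a : ℝ) - b ≠ 0 := sub_ne_zero.2 (by exact_mod_cast hab)
    have h :
        Circle.exp (π / (a - b)) ^ a * (Circle.exp (π / (a - b)))⁻¹ ^ b = Circle.exp π := by
      rw [inv_pow, ← div_eq_mul_inv, ← Circle.exp_natCast_mul, ← Circle.exp_natCast_mul,
        ← Circle.exp_sub]
      congr 1
      field_simp
    rw [← Circle.coe_inv_eq_conj, ← Circle.coe_pow, ← Circle.coe_pow, ← Circle.coe_mul, h,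
      Circle.coe_exp, exp_pi_mul_I]
  have hrot (z : ℂ) : (fun z => z ^ a * conj z ^ b * gaussWeight z) (rotation c z)
      = -(z ^ a * conj z ^ b * gaussWeight z) := by
    simp only [rotation_apply, gaussWeight_circle_mul, map_mul, mul_pow]
    linear_combination (z ^ a * conj z ^ b * gaussWeight z) * hc
  have h := (rotation c).measurePreserving.integral_comp
    (rotation c).toHomeomorph.measurableEmbedding fun z => z ^ a * conj z ^ b * gaussWeight z
  simp only [hrot, integral_neg] at h
  linear_combination -h / 2

lemma integral_monomial_mul_gaussWeight (a b : ℕ) :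
    ∫ z : ℂ, z ^ a * conj z ^ b * gaussWeight z
      = if a = b then (π : ℂ) * (a ! : ℂ) else 0 := by
  split_ifs with hab
  · rw [hab, integral_monomial_mul_gaussWeight_self]
  · exact integral_monomial_mul_gaussWeight_of_ne hab

lemma conj_Hc (m n : ℕ) (z : ℂ) : conj (Hc m n z) = Hc n m z := by
  simp only [Hc, map_sum, map_mul, map_pow, map_neg, map_one, map_natCast, conj_conj, min_comm m n]
  exact Finset.sum_congr rfl fun k _ => by ring

lemma Hc_zero_right (m : ℕ) (z : ℂ) : Hc m 0 z = z ^ m := by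
  simp [Hc]

noncomputable def hcTerm (m n k : ℕ) (z : ℂ) : ℂ :=
  (-1 : ℂ) ^ k * (k ! : ℂ) * (m.choose k : ℂ) * (n.choose k : ℂ)
    * z ^ (m - k) * conj z ^ (n - k)

lemma Hc_eq_sum_range {m n N : ℕ} (hN : n ≤ N) (z : ℂ) :
    Hc m n z = ∑ k ∈ Finset.range (N + 1), hcTerm m n k z := by
  refine Finset.sum_subset (Finset.range_subset_range.2 (by omega)) fun k hk hk' => ?_
  simp only [Finset.mem_range, not_lt] at hk hk'
  have hmk : m < k ∨ n < k := by omega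
  rcases hmk with h | h <;> simp [Nat.choose_eq_zero_of_lt h]

lemma hcTerm_succ_zero (m n : ℕ) (z : ℂ) : hcTerm m (n + 1) 0 z = conj z * hcTerm m n 0 z := by
  simp only [hcTerm, pow_zero, Nat.factorial_zero, Nat.cast_one, mul_one, Nat.choose_zero_right,
    tsub_zero, one_mul, pow_succ]
  ring

lemma hcTerm_succ_succ (m : ℕ) {n k : ℕ} (hk : k ≤ n) (z : ℂ) :
    hcTerm m (n + 1) (k + 1) z = conj z * hcTerm m n (k + 1) z - m * hcTerm (m - 1) n k z := by
  rcases m with _ | m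
  · simp [hcTerm]
  have hpascal : ((n + 1).choose (k + 1) : ℂ) = n.choose k + n.choose (k + 1) := by
    exact_mod_cast Nat.choose_succ_succ n k
  have habsorb :
      ((k + 1) ! : ℂ) * ((m + 1).choose (k + 1) : ℂ) = (m + 1) * (k ! * m.choose k) := by
    have h : (k + 1) ! * (m + 1).choose (k + 1) = (m + 1) * (k ! * m.choose k) := by
      rw [Nat.factorial_succ, mul_comm (k + 1), mul_assoc, mul_comm (k + 1),
        ← Nat.add_one_mul_choose_eq]
      ring
    exact_mod_cast h
  have hshift : (n.choose (k + 1) : ℂ) * (conj z * conj z ^ (n - (k + 1)))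
      = n.choose (k + 1) * conj z ^ (n - k) := by
    rcases hk.lt_or_eq with hk | rfl
    · rw [← pow_succ', show n - (k + 1) + 1 = n - k by omega]
    · simp
  simp only [hcTerm, Nat.add_sub_add_right, Nat.add_sub_cancel, hpascal]
  push_cast
  linear_combination (-1 : ℂ) ^ (k + 1) * z ^ (m - k) * conj z ^ (n - k) * n.choose k * habsorb
    + (-1 : ℂ) ^ k * ((k + 1) ! : ℂ) * ((m + 1).choose (k + 1) : ℂ) * z ^ (m - k) * hshift

lemma Hc_succ_right (m n : ℕ) (z : ℂ) :
    Hc m (n + 1) z = conj z * Hc m n z - m * Hc (m - 1) n z := by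
  rw [Hc_eq_sum_range le_rfl, Hc_eq_sum_range n.le_succ, Hc_eq_sum_range (m := m - 1) le_rfl,
    Finset.sum_range_succ', Finset.sum_range_succ' (fun k => hcTerm m n k z), mul_add,
    Finset.mul_sum, Finset.mul_sum, Finset.sum_congr rfl fun k hk =>
      hcTerm_succ_succ m (Nat.lt_succ_iff.1 (Finset.mem_range.1 hk)) z,
    Finset.sum_sub_distrib, hcTerm_succ_zero]
  ring

lemma Nat.cast_descFactorial_succ {R : Type*} [Ring R] (a n : ℕ) :
    (a.descFactorial (n + 1) : R) = ((a : R) - n) * a.descFactorial n := by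
  rw [Nat.descFactorial_succ]
  rcases le_or_gt n a with h | h
  · rw [Nat.cast_mul, Nat.cast_sub h]
  · simp [Nat.descFactorial_eq_zero_iff_lt.2 h]

lemma integrable_Hc_mul_monomial_mul_gaussWeight (m n a b : ℕ) :
    Integrable fun z : ℂ => Hc m n z * (z ^ a * conj z ^ b) * gaussWeight z := by
  have h : (fun z : ℂ => Hc m n z * (z ^ a * conj z ^ b) * gaussWeight z) = fun z =>
      ∑ k ∈ Finset.range (min m n + 1), (-1 : ℂ) ^ k * (k ! : ℂ) * (m.choose k : ℂ)
        * (n.choose k : ℂ) * (z ^ (m - k + a) * conj z ^ (n - k + b) * gaussWeight z) := by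
    funext z
    rw [Hc, Finset.sum_mul, Finset.sum_mul]
    exact Finset.sum_congr rfl fun k _ => by ring
  rw [h]
  exact integrable_finsetSum _ fun k _ => (integrable_monomial_mul_gaussWeight _ _).const_mul _

lemma integral_Hc_mul_monomial_mul_gaussWeight (m n a b : ℕ) :
    ∫ z : ℂ, Hc m n z * (z ^ a * conj z ^ b) * gaussWeight z
      = if m + a = n + b then (π : ℂ) * (b ! : ℂ) * (a.descFactorial n : ℂ) else 0 := by
  induction n generalizing m b with
  | zero =>
    simp only [Hc_zero_right, ← mul_assoc, ← pow_add, integral_monomial_mul_gaussWeight,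
      zero_add, Nat.descFactorial_zero, Nat.cast_one, mul_one]
    split_ifs with h <;> simp [h]
  | succ n ih =>
    have h (z : ℂ) : Hc m (n + 1) z * (z ^ a * conj z ^ b) * gaussWeight z
        = Hc m n z * (z ^ a * conj z ^ (b + 1)) * gaussWeight z
          - m * (Hc (m - 1) n z * (z ^ a * conj z ^ b) * gaussWeight z) := by
      rw [Hc_succ_right]
      ring
    simp_rw [h]
    rw [integral_sub (integrable_Hc_mul_monomial_mul_gaussWeight _ _ _ _)
      ((integrable_Hc_mul_monomial_mul_gaussWeight _ _ _ _).const_mul _), integral_const_mul,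
      ih, ih, Nat.cast_descFactorial_succ, Nat.factorial_succ]
    rcases m with _ | m
    · simp only [CharP.cast_eq_zero, zero_mul, sub_zero, zero_add]
      split_ifs with h₁ h₂ <;> try omega
      · subst h₁
        push_cast
        ring
      · rfl
    · simp only [Nat.add_sub_cancel]
      split_ifs with h₁ h₂ h₃ <;> try omega
      · have h : (m : ℂ) + 1 + a = n + (b + 1) := by exact_mod_cast h₁
        push_cast
        linear_combination (-(π : ℂ) * (b ! : ℂ) * (a.descFactorial n : ℂ)) * h
      · simp

lemma integral_Hc_mul_conj_Hc_mul_gaussWeight_of_le (m m' : ℕ) {n n' : ℕ} (h : n' ≤ n) :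
    ∫ z : ℂ, Hc m n z * conj (Hc m' n' z) * gaussWeight z
      = (π : ℂ) * (m ! : ℂ) * (n ! : ℂ)
          * (if m = m' then 1 else 0) * (if n = n' then 1 else 0) := by
  have hexpand (z : ℂ) : Hc m n z * conj (Hc m' n' z) * gaussWeight z
      = ∑ k ∈ Finset.range (min n' m' + 1), (-1 : ℂ) ^ k * (k ! : ℂ) * (n'.choose k : ℂ)
        * (m'.choose k : ℂ)
        * (Hc m n z * (z ^ (n' - k) * conj z ^ (m' - k)) * gaussWeight z) := by
    rw [conj_Hc, Hc.eq_1 n' m', Finset.mul_sum, Finset.sum_mul]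
    exact Finset.sum_congr rfl fun k _ => by ring
  simp_rw [hexpand]
  rw [integral_finsetSum _ fun k _ =>
    (integrable_Hc_mul_monomial_mul_gaussWeight _ _ _ _).const_mul _]
  simp_rw [integral_const_mul, integral_Hc_mul_monomial_mul_gaussWeight]
  -- only `k = 0` survives, since `(n' - k).descFactorial n = 0` for `k > 0`
  rw [Finset.sum_eq_single 0]
  · simp only [pow_zero, Nat.factorial_zero, Nat.choose_zero_right, Nat.sub_zero, Nat.cast_one,
      one_mul]
    rcases h.lt_or_eq with h | rfl
    · simp [Nat.descFactorial_eq_zero_iff_lt.2 h, h.ne']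
    · by_cases hm : m = m'
      · subst hm
        rw [if_pos (add_comm m n'), Nat.descFactorial_self]
        simp
      · simp [hm, show m + n' ≠ n' + m' by omega]
  · intro k hk hk₀
    have hk : k ≤ n' := by simp at hk; omega
    simp [Nat.descFactorial_eq_zero_iff_lt.2 (show n' - k < n by omega)]
  · simp

lemma integral_Hc_mul_conj_Hc_mul_gaussWeight_eq_conj (m n m' n' : ℕ) :
    ∫ z : ℂ, Hc m n z * conj (Hc m' n' z) * gaussWeight z
      = conj (∫ z : ℂ, Hc m' n' z * conj (Hc m n z) * gaussWeight z) := by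
  rw [← integral_conj]
  congr 1
  funext z
  simp only [map_mul, conj_conj, gaussWeight, conj_ofReal]
  ring

theorem complexHermite_orthogonality (m n m' n' : ℕ) :
    ∫ z : ℂ, Hc m n z * (starRingEnd ℂ) (Hc m' n' z) * ((Real.exp (-(‖z‖)^2) : ℝ) : ℂ)
      = (Real.pi : ℂ) * (Nat.factorial m : ℂ) * (Nat.factorial n : ℂ)
          * (if m = m' then 1 else 0) * (if n = n' then 1 else 0) := by
  change ∫ z : ℂ, Hc m n z * conj (Hc m' n' z) * gaussWeight z = _
  rcases le_total n' n with h | h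
  · exact integral_Hc_mul_conj_Hc_mul_gaussWeight_of_le m m' h
  · rw [integral_Hc_mul_conj_Hc_mul_gaussWeight_eq_conj,
      integral_Hc_mul_conj_Hc_mul_gaussWeight_of_le m' m h]
    by_cases hm : m = m' <;> by_cases hn : n = n' <;> simp [hm, hn, eq_comm]
end
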